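/- arXiv:math/9201277 — 4 statements merged into one kernel-verified Lean document; each statement's English description precedes it below -/
import Mathlib

section
/- Let f : ℝ → ℝ be a C¹ mapping with a power law critical point c of exponent γ ≥ 1 (same left and right exponent), let v = f(c), assume f(x) ≠ v for x ≠ c near c, and set τ = 1 − 1/γ. Define k(y) = ∫_v^y dt/|t − v|^{τ}, i.e. k(y) = γ·sign(y − v)·|y − v|^{1/γ}. Then the composition k ∘ f has, at the point c, a one-sided derivative from the left and a one-sided derivative from the right, and both one-sided derivatives exist and are nonzero. (Thus, in the new coordinate k near the critical value, f has nonzero one-sided derivatives at its critical point.) -/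
open Filter Set Real

/-- Key limit lemma: if `F x / (d x) ^ γ → b ≠ 0` with `d` eventually positive, then
`γ * sign (F x) * |F x| ^ (1/γ) / d x → γ * sign b * |b| ^ (1/γ)`. -/
lemma key_tendsto {l : Filter ℝ} {F d : ℝ → ℝ} {b γ : ℝ} (hγ : 0 < γ) (hb : b ≠ 0)
    (hd : ∀ᶠ x in l, 0 < d x)
    (hg : Filter.Tendsto (fun x => F x / d x ^ γ) l (nhds b)) :
    Filter.Tendsto (fun x => γ * Real.sign (F x) * |F x| ^ (1 / γ) / d x) l
      (nhds (γ * Real.sign b * |b| ^ (1 / γ))) := by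
  set g : ℝ → ℝ := fun x => F x / d x ^ γ with hgdef
  have hsign : ∀ᶠ x in l, Real.sign (g x) = Real.sign b := by
    rcases hb.lt_or_gt with h | h
    · filter_upwards [hg.eventually_lt_const h] with x hx
      rw [Real.sign_of_neg hx, Real.sign_of_neg h]
    · filter_upwards [hg.eventually_const_lt h] with x hx
      rw [Real.sign_of_pos hx, Real.sign_of_pos h]
  have heq : ∀ᶠ x in l, γ * Real.sign (F x) * |F x| ^ (1 / γ) / d x
      = γ * Real.sign b * |g x| ^ (1 / γ) := by
    filter_upwards [hd, hsign] with x hx hsx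
    have hp : (0:ℝ) < d x ^ γ := Real.rpow_pos_of_pos hx γ
    have hF : F x = g x * d x ^ γ := by
      simp only [hgdef]
      rw [div_mul_cancel₀ (F x) hp.ne']
    have hpow : |F x| ^ (1 / γ) = |g x| ^ (1 / γ) * d x := by
      rw [hF, abs_mul, abs_of_pos hp, Real.mul_rpow (abs_nonneg _) hp.le,
        ← Real.rpow_mul hx.le, mul_one_div_cancel hγ.ne', Real.rpow_one]
    have hsgn : Real.sign (F x) = Real.sign (g x) := by
      rcases lt_trichotomy (g x) 0 with h | h | h
      · rw [Real.sign_of_neg h, Real.sign_of_neg (hF ▸ mul_neg_of_neg_of_pos h hp)]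
      · have : F x = 0 := by rw [hF, h, zero_mul]
        rw [this, h]
      · rw [Real.sign_of_pos h, Real.sign_of_pos (hF ▸ mul_pos h hp)]
    rw [hpow, hsgn, hsx]
    field_simp
  have hcont : Filter.Tendsto (fun x => γ * Real.sign b * |g x| ^ (1 / γ)) l
      (nhds (γ * Real.sign b * |b| ^ (1 / γ))) := by
    have habs : Filter.Tendsto (fun x => |g x| ^ (1 / γ)) l (nhds (|b| ^ (1 / γ))) := by
      have h1 : ContinuousAt (fun t : ℝ => t ^ (1 / γ)) |b| :=
        Real.continuousAt_rpow_const _ _ (Or.inl (abs_ne_zero.2 hb))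
      exact h1.tendsto.comp ((continuous_abs.tendsto b).comp hg)
    exact habs.const_mul _
  exact hcont.congr' (Filter.EventuallyEq.symm heq)

/-- **Nonzero one-sided derivatives in the new coordinate.**
Let `f : ℝ → ℝ` be `C¹` with a power law critical point `c` of exponent `γ ≥ 1`
(same left and right exponent), let `v = f c`, and suppose `f x ≠ v` for `x ≠ c`
near `c`.  With `τ = 1 - 1/γ` and `k y = ∫_v^y dt / |t - v|^τ
= γ * sign (y - v) * |y - v| ^ (1/γ)`, the composition `k ∘ f` has nonzero
one-sided derivatives at `c` from the left and from the right. -/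
theorem new_coordinate_one_sided_derivatives
    (f : ℝ → ℝ) (hf : ContDiff ℝ 1 f) (c γ : ℝ) (hγ : 1 ≤ γ)
    -- `c` is a critical point of `f`
    (hcrit : deriv f c = 0)
    -- `c` is an isolated critical point
    (hiso : ∃ δ > (0 : ℝ), ∀ x : ℝ, x ≠ c → |x - c| < δ → deriv f x ≠ 0)
    -- `f x ≠ f c` for `x ≠ c` near `c`
    (hne : ∃ δ > (0 : ℝ), ∀ x : ℝ, x ≠ c → |x - c| < δ → f x ≠ f c)
    -- the power law at `c` with exponent `γ` on both sides
    (hA : ∃ A : ℝ, A ≠ 0 ∧ Filter.Tendsto (fun x => deriv f x / |x - c| ^ (γ - 1))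
        (nhdsWithin c (Set.Iio c)) (nhds A))
    (hB : ∃ B : ℝ, B ≠ 0 ∧ Filter.Tendsto (fun x => deriv f x / |x - c| ^ (γ - 1))
        (nhdsWithin c (Set.Ioi c)) (nhds B))
    -- the new local parameter near the critical value `v = f c`
    (k : ℝ → ℝ)
    (hk : ∀ y : ℝ, k y = γ * Real.sign (y - f c) * |y - f c| ^ (1 / γ)) :
    (∃ L : ℝ, L ≠ 0 ∧ HasDerivWithinAt (fun x => k (f x)) L (Set.Iic c) c) ∧
    (∃ R : ℝ, R ≠ 0 ∧ HasDerivWithinAt (fun x => k (f x)) R (Set.Ici c) c) := by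
  obtain ⟨A, hA0, hAt⟩ := hA
  obtain ⟨B, hB0, hBt⟩ := hB
  have hγ0 : (0:ℝ) < γ := lt_of_lt_of_le one_pos hγ
  have hdiff : Differentiable ℝ f := hf.differentiable one_ne_zero
  have hkfc : k (f c) = 0 := by rw [hk, sub_self, Real.sign_zero, mul_zero, zero_mul]
  -- sign is nonzero on nonzero inputs
  have hsignne : ∀ u : ℝ, u ≠ 0 → Real.sign u ≠ 0 := by
    intro u hu
    rcases hu.lt_or_gt with h | h
    · rw [Real.sign_of_neg h]; norm_num
    · rw [Real.sign_of_pos h]; norm_num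
  have habsne : ∀ u : ℝ, u ≠ 0 → |u| ^ (1/γ) ≠ 0 :=
    fun u hu => (Real.rpow_pos_of_pos (abs_pos.2 hu) _).ne'
  have hF' : ∀ x : ℝ, HasDerivAt (fun y => f y - f c) (deriv f x) x :=
    fun x => ((hdiff x).hasDerivAt).sub_const _
  have hfa : Filter.Tendsto (fun x => f x - f c) (nhds c) (nhds 0) := by
    have := ((hdiff.continuous.tendsto c).sub_const (f c))
    rwa [sub_self] at this
  constructor
  · -- left side
    have hG' : ∀ᶠ x in nhdsWithin c (Set.Iio c),
        HasDerivAt (fun y => (c - y) ^ γ) (γ * (c - x) ^ (γ - 1) * (-1)) x := by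
      filter_upwards [self_mem_nhdsWithin] with x hx
      have h1 : HasDerivAt (fun y : ℝ => c - y) (-1) x := (hasDerivAt_id x).const_sub c
      exact (Real.hasDerivAt_rpow_const
        (Or.inl (sub_ne_zero.2 (ne_of_gt hx)))).comp x h1
    have hg'ne : ∀ᶠ x in nhdsWithin c (Set.Iio c), γ * (c - x) ^ (γ - 1) * (-1) ≠ 0 := by
      filter_upwards [self_mem_nhdsWithin] with x hx
      have : (0:ℝ) < (c - x) ^ (γ - 1) := Real.rpow_pos_of_pos (sub_pos.2 hx) _
      positivity
    have hga : Filter.Tendsto (fun x => (c - x) ^ γ) (nhdsWithin c (Set.Iio c)) (nhds 0) := by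
      have h1 : Filter.Tendsto (fun x : ℝ => c - x) (nhdsWithin c (Set.Iio c)) (nhds 0) := by
        have := ((continuous_sub_left c).tendsto c).mono_left
          (nhdsWithin_le_nhds (s := Set.Iio c))
        simpa using this
      have h2 : ContinuousAt (fun t : ℝ => t ^ γ) 0 :=
        Real.continuousAt_rpow_const _ _ (Or.inr hγ0.le)
      have := h2.tendsto.comp h1
      simpa [Real.zero_rpow hγ0.ne', Function.comp_def] using this
    have hdiv : Filter.Tendsto (fun x => deriv f x / (γ * (c - x) ^ (γ - 1) * (-1)))
        (nhdsWithin c (Set.Iio c)) (nhds (-(A / γ))) := by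
      have := (hAt.div_const γ).neg
      refine this.congr' ?_
      filter_upwards [self_mem_nhdsWithin] with x hx
      have habs : |x - c| = c - x := by rw [abs_of_neg (sub_neg.2 hx)]; ring
      rw [habs]
      field_simp
    have hgl : Filter.Tendsto (fun x => (f x - f c) / (c - x) ^ γ)
        (nhdsWithin c (Set.Iio c)) (nhds (-(A / γ))) :=
      HasDerivAt.lhopital_zero_nhdsLT
        (Filter.Eventually.of_forall hF') hG' hg'ne
        (hfa.mono_left nhdsWithin_le_nhds) hga hdiv
    have hbL : -(A / γ) ≠ 0 := by
      simp only [ne_eq, neg_eq_zero, div_eq_zero_iff, not_or]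
      exact ⟨hA0, hγ0.ne'⟩
    have hd : ∀ᶠ x in nhdsWithin c (Set.Iio c), 0 < c - x := by
      filter_upwards [self_mem_nhdsWithin] with x hx
      exact sub_pos.2 hx
    have hkey := (key_tendsto hγ0 hbL hd hgl).neg
    refine ⟨-(γ * Real.sign (-(A / γ)) * |(-(A / γ))| ^ (1 / γ)), ?_, ?_⟩
    · exact neg_ne_zero.2 (mul_ne_zero (mul_ne_zero hγ0.ne' (hsignne _ hbL)) (habsne _ hbL))
    · rw [hasDerivWithinAt_iff_tendsto_slope, Set.Iic_diff_right]
      refine hkey.congr' ?_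
      filter_upwards [self_mem_nhdsWithin] with x hx
      rw [slope_def_field, hkfc, sub_zero, hk]
      have hxc : x - c = -(c - x) := by ring
      rw [hxc, div_neg]
  · -- right side
    have hG' : ∀ᶠ x in nhdsWithin c (Set.Ioi c),
        HasDerivAt (fun y => (y - c) ^ γ) (γ * (x - c) ^ (γ - 1) * 1) x := by
      filter_upwards [self_mem_nhdsWithin] with x hx
      have h1 : HasDerivAt (fun y : ℝ => y - c) 1 x := (hasDerivAt_id x).sub_const c
      exact (Real.hasDerivAt_rpow_const
        (Or.inl (sub_ne_zero.2 (ne_of_gt hx)))).comp x h1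
    have hg'ne : ∀ᶠ x in nhdsWithin c (Set.Ioi c), γ * (x - c) ^ (γ - 1) * 1 ≠ 0 := by
      filter_upwards [self_mem_nhdsWithin] with x hx
      have : (0:ℝ) < (x - c) ^ (γ - 1) := Real.rpow_pos_of_pos (sub_pos.2 hx) _
      positivity
    have hga : Filter.Tendsto (fun x => (x - c) ^ γ) (nhdsWithin c (Set.Ioi c)) (nhds 0) := by
      have h1 : Filter.Tendsto (fun x : ℝ => x - c) (nhdsWithin c (Set.Ioi c)) (nhds 0) := by
        have := ((continuous_sub_right c).tendsto c).mono_left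
          (nhdsWithin_le_nhds (s := Set.Ioi c))
        simpa using this
      have h2 : ContinuousAt (fun t : ℝ => t ^ γ) 0 :=
        Real.continuousAt_rpow_const _ _ (Or.inr hγ0.le)
      have := h2.tendsto.comp h1
      simpa [Real.zero_rpow hγ0.ne', Function.comp_def] using this
    have hdiv : Filter.Tendsto (fun x => deriv f x / (γ * (x - c) ^ (γ - 1) * 1))
        (nhdsWithin c (Set.Ioi c)) (nhds (B / γ)) := by
      have := hBt.div_const γ
      refine this.congr' ?_
      filter_upwards [self_mem_nhdsWithin] with x hx
      have habs : |x - c| = x - c := abs_of_pos (sub_pos.2 hx)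
      rw [habs]
      field_simp
    have hgr : Filter.Tendsto (fun x => (f x - f c) / (x - c) ^ γ)
        (nhdsWithin c (Set.Ioi c)) (nhds (B / γ)) :=
      HasDerivAt.lhopital_zero_nhdsGT
        (Filter.Eventually.of_forall hF') hG' hg'ne
        (hfa.mono_left nhdsWithin_le_nhds) hga hdiv
    have hbR : B / γ ≠ 0 := div_ne_zero hB0 hγ0.ne'
    have hd : ∀ᶠ x in nhdsWithin c (Set.Ioi c), 0 < x - c := by
      filter_upwards [self_mem_nhdsWithin] with x hx
      exact sub_pos.2 hx
    have hkey := key_tendsto hγ0 hbR hd hgr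
    refine ⟨γ * Real.sign (B / γ) * |B / γ| ^ (1 / γ), ?_, ?_⟩
    · exact mul_ne_zero (mul_ne_zero hγ0.ne' (hsignne _ hbR)) (habsne _ hbR)
    · rw [hasDerivWithinAt_iff_tendsto_slope, Set.Ici_sdiff_left]
      refine hkey.congr' ?_
      filter_upwards [self_mem_nhdsWithin] with x hx
      rw [slope_def_field, hkfc, sub_zero, hk]
end

section
/- Let f : ℝ → ℝ be a C¹ mapping with a power law critical point c of left exponent γ⁻ and right exponent γ⁺, and let h : ℝ → ℝ be an orientation-preserving C¹-diffeomorphism. Then h(c) is a power law critical point of the conjugate mapping g = h ∘ f ∘ h⁻¹ with the same left exponent γ⁻ and the same right exponent γ⁺. In other words, the left and right exponents of a power law critical point are C¹-invariants. -/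
open Filter Set Function

private lemma conj_deriv (f h hinv : ℝ → ℝ) (hf : ContDiff ℝ 1 f) (hh : ContDiff ℝ 1 h)
    (hhinv : ContDiff ℝ 1 hinv) (x : ℝ) :
    deriv (h ∘ f ∘ hinv) x = deriv h (f (hinv x)) * (deriv f (hinv x) * deriv hinv x) := by
  have dh : DifferentiableAt ℝ h (f (hinv x)) := (hh.differentiable one_ne_zero).differentiableAt
  have dfi : DifferentiableAt ℝ (f ∘ hinv) x :=
    ((hf.differentiable one_ne_zero).comp (hhinv.differentiable one_ne_zero)).differentiableAt
  have df : DifferentiableAt ℝ f (hinv x) := (hf.differentiable one_ne_zero).differentiableAt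
  have dinv : DifferentiableAt ℝ hinv x := (hhinv.differentiable one_ne_zero).differentiableAt
  rw [deriv_comp x dh dfi, deriv_comp x df dinv]
  rfl

private lemma inv_deriv_eq (h hinv : ℝ → ℝ) (hh : ContDiff ℝ 1 h) (hhinv : ContDiff ℝ 1 hinv)
    (hright : Function.RightInverse hinv h) (x : ℝ) :
    deriv h (hinv x) * deriv hinv x = 1 := by
  have dh : DifferentiableAt ℝ h (hinv x) := (hh.differentiable one_ne_zero).differentiableAt
  have dinv : DifferentiableAt ℝ hinv x := (hhinv.differentiable one_ne_zero).differentiableAt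
  have := deriv_comp x dh dinv
  rw [show h ∘ hinv = id from funext hright, deriv_id] at this
  exact this.symm

private lemma aux_tendsto (f h hinv : ℝ → ℝ) (hf : ContDiff ℝ 1 f) (hh : ContDiff ℝ 1 h)
    (hhinv : ContDiff ℝ 1 hinv) (c γ A : ℝ) (hA0 : A ≠ 0)
    (hpos : ∀ x : ℝ, 0 < deriv h x)
    (hleft : Function.LeftInverse hinv h) (hright : Function.RightInverse hinv h)
    (s t : Set ℝ) (hsub : s ⊆ {h c}ᶜ) (hmaps : Set.MapsTo hinv s t)
    (hAlim : Filter.Tendsto (fun x => deriv f x / |x - c| ^ (γ - 1))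
        (nhdsWithin c t) (nhds A)) :
    ∃ A' : ℝ, A' ≠ 0 ∧
      Filter.Tendsto (fun x => deriv (h ∘ f ∘ hinv) x / |x - h c| ^ (γ - 1))
        (nhdsWithin (h c) s) (nhds A') := by
  have hinvc : hinv (h c) = c := hleft c
  have dinvpos : ∀ y, 0 < deriv hinv y := by
    intro y
    have := inv_deriv_eq h hinv hh hhinv hright y
    nlinarith [hpos (hinv y)]
  set d := deriv hinv (h c) with hd
  have dpos : 0 < d := dinvpos _
  -- tendsto of hinv into nhdsWithin c t
  have Thinv : Tendsto hinv (nhdsWithin (h c) s) (nhdsWithin c t) := by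
    have := (hhinv.continuous.continuousAt (x := h c)).continuousWithinAt.tendsto_nhdsWithin hmaps
    rwa [hinvc] at this
  have T1 : Tendsto (fun y => deriv h (f (hinv y))) (nhdsWithin (h c) s)
      (nhds (deriv h (f c))) := by
    have := ((hh.continuous_deriv le_rfl).comp
      (hf.continuous.comp hhinv.continuous)).tendsto (h c)
    rw [Function.comp_apply, Function.comp_apply, hinvc] at this
    exact this.mono_left nhdsWithin_le_nhds
  have T2 : Tendsto (fun y => deriv hinv y) (nhdsWithin (h c) s) (nhds d) :=
    ((hhinv.continuous_deriv le_rfl).tendsto (h c)).mono_left nhdsWithin_le_nhds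
  have T3 : Tendsto (fun y => deriv f (hinv y) / |hinv y - c| ^ (γ - 1))
      (nhdsWithin (h c) s) (nhds A) := hAlim.comp Thinv
  -- slope limit
  have hder : HasDerivAt hinv d (h c) := (hhinv.differentiable one_ne_zero).differentiableAt.hasDerivAt
  have Tslope : Tendsto (fun y => |hinv y - c| / |y - h c|) (nhdsWithin (h c) s) (nhds d) := by
    have h1 : Tendsto (slope hinv (h c)) (nhdsWithin (h c) {h c}ᶜ) (nhds d) :=
      hasDerivAt_iff_tendsto_slope.mp hder
    have h2 := (h1.mono_left (nhdsWithin_mono _ hsub)).abs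
    rw [abs_of_pos dpos] at h2
    refine h2.congr fun y => ?_
    rw [slope_def_field, hinvc, abs_div]
  have T4 : Tendsto (fun y => (|hinv y - c| / |y - h c|) ^ (γ - 1)) (nhdsWithin (h c) s)
      (nhds (d ^ (γ - 1))) :=
    (Real.continuousAt_rpow_const d (γ - 1) (Or.inl dpos.ne')).tendsto.comp Tslope
  refine ⟨deriv h (f c) * (A * (d ^ (γ - 1) * d)), ?_, ?_⟩
  · exact mul_ne_zero (hpos (f c)).ne' (mul_ne_zero hA0
      (mul_ne_zero (Real.rpow_pos_of_pos dpos _).ne' dpos.ne'))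
  · have Tprod := T1.mul (T3.mul (T4.mul T2))
    refine Tprod.congr' ?_
    filter_upwards [self_mem_nhdsWithin] with y hy
    have hy' : y ≠ h c := hsub hy
    have hinvy : hinv y ≠ c := fun hc => hy' ((hright y).symm.trans (congrArg h hc))
    have ha : (0:ℝ) < |hinv y - c| := abs_pos.2 (sub_ne_zero.2 hinvy)
    have hb : (0:ℝ) < |y - h c| := abs_pos.2 (sub_ne_zero.2 hy')
    have ha' : |hinv y - c| ^ (γ - 1) ≠ 0 := (Real.rpow_pos_of_pos ha _).ne'
    have hb' : |y - h c| ^ (γ - 1) ≠ 0 := (Real.rpow_pos_of_pos hb _).ne'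
    rw [Real.div_rpow (abs_nonneg _) (abs_nonneg _),
      conj_deriv f h hinv hf hh hhinv y]
    field_simp

/-- **The exponents of a power law critical point are `C¹`-invariants.**
Let `f : ℝ → ℝ` be `C¹` with a power law critical point `c` of left exponent `γm`
and right exponent `γp`, and let `h` be an orientation-preserving
`C¹`-diffeomorphism of `ℝ` with inverse `hinv`.  Then `h c` is a power law critical
point of the conjugate map `g = h ∘ f ∘ hinv` with the same left and right
exponents. -/
theorem power_law_exponents_C1_invariant
    (f : ℝ → ℝ) (hf : ContDiff ℝ 1 f) (c γm γp : ℝ)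
    (hγm : 1 ≤ γm) (hγp : 1 ≤ γp)
    -- `c` is an isolated critical point of `f`
    (hcrit : deriv f c = 0)
    (hiso : ∃ δ > (0 : ℝ), ∀ x : ℝ, x ≠ c → |x - c| < δ → deriv f x ≠ 0)
    -- the power law at `c` with left exponent `γm` and right exponent `γp`
    (hA : ∃ A : ℝ, A ≠ 0 ∧ Filter.Tendsto (fun x => deriv f x / |x - c| ^ (γm - 1))
        (nhdsWithin c (Set.Iio c)) (nhds A))
    (hB : ∃ B : ℝ, B ≠ 0 ∧ Filter.Tendsto (fun x => deriv f x / |x - c| ^ (γp - 1))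
        (nhdsWithin c (Set.Ioi c)) (nhds B))
    -- `h` is an orientation-preserving `C¹`-diffeomorphism with inverse `hinv`
    (h hinv : ℝ → ℝ) (hh : ContDiff ℝ 1 h) (hpos : ∀ x : ℝ, 0 < deriv h x)
    (hhinv : ContDiff ℝ 1 hinv)
    (hleft : Function.LeftInverse hinv h) (hright : Function.RightInverse hinv h) :
    -- `h c` is an isolated critical point of `g = h ∘ f ∘ hinv` ...
    deriv (h ∘ f ∘ hinv) (h c) = 0 ∧
    (∃ δ > (0 : ℝ), ∀ x : ℝ, x ≠ h c → |x - h c| < δ → deriv (h ∘ f ∘ hinv) x ≠ 0) ∧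
    -- ... and it is a power law critical point with the same exponents
    (∃ A' : ℝ, A' ≠ 0 ∧
      Filter.Tendsto (fun x => deriv (h ∘ f ∘ hinv) x / |x - h c| ^ (γm - 1))
        (nhdsWithin (h c) (Set.Iio (h c))) (nhds A')) ∧
    (∃ B' : ℝ, B' ≠ 0 ∧
      Filter.Tendsto (fun x => deriv (h ∘ f ∘ hinv) x / |x - h c| ^ (γp - 1))
        (nhdsWithin (h c) (Set.Ioi (h c))) (nhds B')) := by
  
  obtain ⟨A, hA0, hAlim⟩ := hA
  obtain ⟨B, hB0, hBlim⟩ := hB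
  obtain ⟨δ, hδ, hisoδ⟩ := hiso
  have hinvc : hinv (h c) = c := hleft c
  have dinvpos : ∀ y, 0 < deriv hinv y := by
    intro y
    have := inv_deriv_eq h hinv hh hhinv hright y
    nlinarith [hpos (hinv y)]
  have hmono : StrictMono hinv := strictMono_of_deriv_pos dinvpos
  refine ⟨?_, ?_, ?_, ?_⟩
  · rw [conj_deriv f h hinv hf hh hhinv, hinvc, hcrit]
    ring
  · -- isolated critical point
    have hc : ContinuousAt hinv (h c) := hhinv.continuous.continuousAt
    rw [Metric.continuousAt_iff] at hc
    obtain ⟨δ', hδ', hδ'2⟩ := hc δ hδ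
    refine ⟨δ', hδ', fun x hx1 hx2 => ?_⟩
    have h1 : hinv x ≠ c := fun hc' => hx1 ((hright x).symm.trans (congrArg h hc'))
    have h2 : |hinv x - c| < δ := by
      have := hδ'2 (show dist x (h c) < δ' by rwa [Real.dist_eq])
      rwa [Real.dist_eq, hinvc] at this
    rw [conj_deriv f h hinv hf hh hhinv]
    exact mul_ne_zero (hpos _).ne' (mul_ne_zero (hisoδ _ h1 h2) (dinvpos x).ne')
  · refine aux_tendsto f h hinv hf hh hhinv c γm A hA0 hpos hleft hright
      (Set.Iio (h c)) (Set.Iio c) (fun y hy => ne_of_lt hy) (fun y hy => ?_) hAlim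
    have := hmono hy
    rwa [hinvc] at this
  · refine aux_tendsto f h hinv hf hh hhinv c γp B hB0 hpos hleft hright
      (Set.Ioi (h c)) (Set.Ioi c) (fun y hy => ne_of_gt hy) (fun y hy => ?_) hBlim
    have := hmono hy
    rwa [hinvc] at this
end

section
/- Let f : ℝ → ℝ be a C¹ mapping with a power law critical point c whose left and right exponents are both equal to γ ≥ 1, and let σ = lim_{x→c⁻} f'(x)/f'(−x + 2c) be the asymmetry of f at c. Then for every orientation-preserving C¹-diffeomorphism h : ℝ → ℝ, the conjugate mapping g = h ∘ f ∘ h⁻¹ has a power law critical point at h(c) with both exponents equal to γ, and the asymmetry of g at h(c) equals σ. In other words, the asymmetry is a C¹-invariant. -/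
open Filter Set Topology


/-- **The asymmetry is a `C¹`-invariant.**
Let `f : ℝ → ℝ` be `C¹` with a power law critical point `c` whose left and right
exponents both equal `γ ≥ 1`, and let `σ` be the asymmetry of `f` at `c`.  Then for
every orientation-preserving `C¹`-diffeomorphism `h` of `ℝ` (with inverse `hinv`),
the conjugate `g = h ∘ f ∘ hinv` has a power law critical point at `h c` with both
exponents equal to `γ`, and the asymmetry of `g` at `h c` equals `σ`. -/
theorem asymmetry_C1_invariant
    (f : ℝ → ℝ) (hf : ContDiff ℝ 1 f) (c γ : ℝ) (hγ : 1 ≤ γ)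
    -- `c` is an isolated critical point of `f`
    (hcrit : deriv f c = 0)
    (hiso : ∃ δ > (0 : ℝ), ∀ x : ℝ, x ≠ c → |x - c| < δ → deriv f x ≠ 0)
    -- the power law at `c` with exponent `γ` on both sides
    (hA : ∃ A : ℝ, A ≠ 0 ∧ Filter.Tendsto (fun x => deriv f x / |x - c| ^ (γ - 1))
        (nhdsWithin c (Set.Iio c)) (nhds A))
    (hB : ∃ B : ℝ, B ≠ 0 ∧ Filter.Tendsto (fun x => deriv f x / |x - c| ^ (γ - 1))
        (nhdsWithin c (Set.Ioi c)) (nhds B))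
    -- `σ` is the asymmetry of `f` at `c`
    (σ : ℝ) (hσ0 : σ ≠ 0)
    (hσ : Filter.Tendsto (fun x => deriv f x / deriv f (-x + 2 * c))
        (nhdsWithin c (Set.Iio c)) (nhds σ))
    -- `h` is an orientation-preserving `C¹`-diffeomorphism with inverse `hinv`
    (h hinv : ℝ → ℝ) (hh : ContDiff ℝ 1 h) (hpos : ∀ x : ℝ, 0 < deriv h x)
    (hhinv : ContDiff ℝ 1 hinv)
    (hleft : Function.LeftInverse hinv h) (hright : Function.RightInverse hinv h) :
    -- `h c` is a power law critical point of `g = h ∘ f ∘ hinv` with exponent `γ` ...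
    deriv (h ∘ f ∘ hinv) (h c) = 0 ∧
    (∃ δ > (0 : ℝ), ∀ x : ℝ, x ≠ h c → |x - h c| < δ → deriv (h ∘ f ∘ hinv) x ≠ 0) ∧
    (∃ A' : ℝ, A' ≠ 0 ∧
      Filter.Tendsto (fun x => deriv (h ∘ f ∘ hinv) x / |x - h c| ^ (γ - 1))
        (nhdsWithin (h c) (Set.Iio (h c))) (nhds A')) ∧
    (∃ B' : ℝ, B' ≠ 0 ∧
      Filter.Tendsto (fun x => deriv (h ∘ f ∘ hinv) x / |x - h c| ^ (γ - 1))
        (nhdsWithin (h c) (Set.Ioi (h c))) (nhds B')) ∧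
    -- ... and the asymmetry of `g` at `h c` equals `σ`
    Filter.Tendsto (fun x => deriv (h ∘ f ∘ hinv) x / deriv (h ∘ f ∘ hinv) (-x + 2 * h c))
        (nhdsWithin (h c) (Set.Iio (h c))) (nhds σ) := by

  classical
  obtain ⟨A, hA0, hAlim⟩ := hA
  obtain ⟨B, hB0, hBlim⟩ := hB
  obtain ⟨δ, hδ, hisoδ⟩ := hiso
  have hfd : Differentiable ℝ f := hf.differentiable one_ne_zero
  have hhd : Differentiable ℝ h := hh.differentiable one_ne_zero
  have hid : Differentiable ℝ hinv := hhinv.differentiable one_ne_zero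
  have hinvhc : hinv (h c) = c := hleft c
  have hmono : StrictMono h := strictMono_of_deriv_pos hpos
  have himono : StrictMono hinv := by
    intro a b hab
    have := (hmono.lt_iff_lt (a := hinv a) (b := hinv b))
    rw [hright a, hright b] at this
    exact this.mp hab
  have hcomp_id : h ∘ hinv = id := funext hright
  have hderiv_inv : ∀ y, deriv h (hinv y) * deriv hinv y = 1 := by
    intro y
    have h1 : deriv (h ∘ hinv) y = deriv h (hinv y) * deriv hinv y :=
      deriv_comp y (hhd _) (hid _)
    rw [hcomp_id] at h1
    simpa using h1.symm
  have hinv_pos : ∀ y, 0 < deriv hinv y := by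
    intro y
    have h1 := hderiv_inv y
    nlinarith [hpos (hinv y)]
  have hg : ∀ x, deriv (h ∘ f ∘ hinv) x
      = deriv h (f (hinv x)) * (deriv f (hinv x) * deriv hinv x) := by
    intro x
    have h1 : deriv (h ∘ (f ∘ hinv)) x = deriv h ((f ∘ hinv) x) * deriv (f ∘ hinv) x :=
      deriv_comp x (hhd _) ((hfd _).comp x (hid _))
    have h2 : deriv (f ∘ hinv) x = deriv f (hinv x) * deriv hinv x :=
      deriv_comp x (hfd _) (hid _)
    rw [h2] at h1
    simpa [mul_assoc] using h1
  have hch : Continuous (deriv h) := hh.continuous_deriv le_rfl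
  have hci : Continuous (deriv hinv) := hhinv.continuous_deriv le_rfl
  -- part 1
  have part1 : deriv (h ∘ f ∘ hinv) (h c) = 0 := by
    rw [hg, hinvhc, hcrit]; ring
  -- continuity of hinv at h c
  have hcont_hinv : ContinuousAt hinv (h c) := hid.continuous.continuousAt
  -- the slope limit
  set D := deriv hinv (h c) with hD
  have hDpos : 0 < D := hinv_pos _
  have hslope : Tendsto (fun x => |hinv x - c| / |x - h c|) (𝓝[≠] (h c)) (𝓝 D) := by
    have h1 := hasDerivAt_iff_tendsto_slope.mp (hid (h c)).hasDerivAt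
    have h2 := h1.abs
    have heq : ∀ x, |slope hinv (h c) x| = |hinv x - c| / |x - h c| := by
      intro x
      rw [slope_def_field, abs_div, hinvhc]
    rw [abs_of_pos hDpos] at h2
    exact h2.congr heq
  -- hinv maps the one-sided filters
  have hinv_tendsto : Tendsto hinv (𝓝 (h c)) (𝓝 c) := by
    have := hcont_hinv.tendsto; rwa [hinvhc] at this
  have hmapL : Tendsto hinv (𝓝[<] (h c)) (𝓝[<] c) := by
    apply tendsto_nhdsWithin_of_tendsto_nhds_of_eventually_within
    · exact hinv_tendsto.mono_left nhdsWithin_le_nhds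
    · filter_upwards [self_mem_nhdsWithin] with x hx
      have : hinv x < hinv (h c) := himono hx
      rwa [hinvhc] at this
  have hmapR : Tendsto hinv (𝓝[>] (h c)) (𝓝[>] c) := by
    apply tendsto_nhdsWithin_of_tendsto_nhds_of_eventually_within
    · exact hinv_tendsto.mono_left nhdsWithin_le_nhds
    · filter_upwards [self_mem_nhdsWithin] with x hx
      have : hinv (h c) < hinv x := himono hx
      rwa [hinvhc] at this
  -- reflection map
  have hrefl : Tendsto (fun x : ℝ => -x + 2 * h c) (𝓝[<] (h c)) (𝓝[>] (h c)) := by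
    apply tendsto_nhdsWithin_of_tendsto_nhds_of_eventually_within
    · have hc1 : Continuous (fun x : ℝ => -x + 2 * h c) := by continuity
      have h2 := (hc1.tendsto (h c)).mono_left (nhdsWithin_le_nhds (s := Iio (h c)))
      rwa [show -h c + 2 * h c = h c by ring] at h2
    · filter_upwards [self_mem_nhdsWithin] with x hx
      simp only [Set.mem_Ioi]
      have : x < h c := hx
      linarith
  have hLne : 𝓝[<] (h c) ≤ 𝓝[≠] (h c) :=
    nhdsWithin_mono _ (fun x hx => ne_of_lt hx)
  have hRne : 𝓝[>] (h c) ≤ 𝓝[≠] (h c) :=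
    nhdsWithin_mono _ (fun x hx => ne_of_gt hx)
  -- continuity limits for the outer derivative factors
  have hhf_cont : Tendsto (fun x => deriv h (f (hinv x))) (𝓝 (h c)) (𝓝 (deriv h (f c))) := by
    have : ContinuousAt (fun x => deriv h (f (hinv x))) (h c) :=
      (hch.continuousAt).comp ((hfd.continuous.continuousAt).comp hcont_hinv)
    have := this.tendsto; rwa [hinvhc] at this
  have hhi_cont : Tendsto (fun x => deriv hinv x) (𝓝 (h c)) (𝓝 D) := hci.continuousAt
  have hfc_ne : deriv h (f c) ≠ 0 := ne_of_gt (hpos _)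
  -- generic one-sided limit construction
  have hDrne : D ^ (γ - 1) ≠ 0 := ne_of_gt (Real.rpow_pos_of_pos hDpos _)
  have key : ∀ (s : Set ℝ), s = Iio (h c) ∨ s = Ioi (h c) →
      Tendsto hinv (𝓝[s] (h c)) (𝓝[hinv '' s] c) → True := fun _ _ _ => trivial
  -- eventual positivity of |hinv x - c| on each side
  have hsideL : ∀ᶠ x in 𝓝[<] (h c), hinv x < c := by
    filter_upwards [self_mem_nhdsWithin] with x hx
    have : hinv x < hinv (h c) := himono hx
    rwa [hinvhc] at this
  have hsideR : ∀ᶠ x in 𝓝[>] (h c), c < hinv x := by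
    filter_upwards [self_mem_nhdsWithin] with x hx
    have : hinv (h c) < hinv x := himono hx
    rwa [hinvhc] at this
  -- Part 3: left limit
  have onesided : ∀ (s : Set ℝ) (K : ℝ) (hK : K ≠ 0)
      (hmap : Tendsto hinv (𝓝[s] (h c)) (𝓝[s.image fun _ => c] c)), True := fun _ _ _ _ => trivial
  clear key onesided
  have mklim : ∀ (L : Filter ℝ) (K : ℝ), K ≠ 0 → L ≤ 𝓝[≠] (h c) →
      Tendsto (fun x => deriv f (hinv x) / |hinv x - c| ^ (γ - 1)) L (𝓝 K) →
      (∀ᶠ x in L, hinv x ≠ c) → (∀ᶠ x in L, x ≠ h c) →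
      Tendsto (fun x => deriv (h ∘ f ∘ hinv) x / |x - h c| ^ (γ - 1)) L
        (𝓝 (deriv h (f c) * D * K * D ^ (γ - 1))) := by
    intro L K hK hLle hKlim hne hxne
    have t1 : Tendsto (fun x => deriv h (f (hinv x))) L (𝓝 (deriv h (f c))) :=
      hhf_cont.mono_left (hLle.trans nhdsWithin_le_nhds)
    have t2 : Tendsto (fun x => deriv hinv x) L (𝓝 D) :=
      hhi_cont.mono_left (hLle.trans nhdsWithin_le_nhds)
    have t4 : Tendsto (fun x => (|hinv x - c| / |x - h c|) ^ (γ - 1)) L (𝓝 (D ^ (γ - 1))) :=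
      (hslope.mono_left hLle).rpow_const (Or.inl (ne_of_gt hDpos))
    have tall := ((t1.mul t2).mul hKlim).mul t4
    apply tall.congr'
    filter_upwards [hne, hxne] with x hu hx
    have hxpos : (0:ℝ) < |x - h c| := abs_pos.mpr (sub_ne_zero.mpr hx)
    have hupos : (0:ℝ) < |hinv x - c| := abs_pos.mpr (sub_ne_zero.mpr hu)
    have hurne : |hinv x - c| ^ (γ - 1) ≠ 0 := ne_of_gt (Real.rpow_pos_of_pos hupos _)
    have hxrne : |x - h c| ^ (γ - 1) ≠ 0 := ne_of_gt (Real.rpow_pos_of_pos hxpos _)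
    rw [Real.div_rpow (abs_nonneg _) (abs_nonneg _), hg x]
    field_simp
  have hneL : ∀ᶠ x in 𝓝[<] (h c), hinv x ≠ c := hsideL.mono fun x hx => ne_of_lt hx
  have hneR : ∀ᶠ x in 𝓝[>] (h c), hinv x ≠ c := hsideR.mono fun x hx => ne_of_gt hx
  have hxneL : ∀ᶠ x in 𝓝[<] (h c), x ≠ h c := by
    filter_upwards [self_mem_nhdsWithin] with x hx; exact ne_of_lt hx
  have hxneR : ∀ᶠ x in 𝓝[>] (h c), x ≠ h c := by
    filter_upwards [self_mem_nhdsWithin] with x hx; exact ne_of_gt hx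
  have part3 : Tendsto (fun x => deriv (h ∘ f ∘ hinv) x / |x - h c| ^ (γ - 1))
      (𝓝[<] (h c)) (𝓝 (deriv h (f c) * D * A * D ^ (γ - 1))) :=
    mklim _ A hA0 hLne (hAlim.comp hmapL) hneL hxneL
  have part4 : Tendsto (fun x => deriv (h ∘ f ∘ hinv) x / |x - h c| ^ (γ - 1))
      (𝓝[>] (h c)) (𝓝 (deriv h (f c) * D * B * D ^ (γ - 1))) :=
    mklim _ B hB0 hRne (hBlim.comp hmapR) hneR hxneR
  have hA'ne : deriv h (f c) * D * A * D ^ (γ - 1) ≠ 0 :=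
    mul_ne_zero (mul_ne_zero (mul_ne_zero hfc_ne (ne_of_gt hDpos)) hA0) hDrne
  have hB'ne : deriv h (f c) * D * B * D ^ (γ - 1) ≠ 0 :=
    mul_ne_zero (mul_ne_zero (mul_ne_zero hfc_ne (ne_of_gt hDpos)) hB0) hDrne
  -- Part 2
  obtain ⟨δ', hδ', hδ'spec⟩ := Metric.continuousAt_iff.mp hcont_hinv δ hδ
  refine ⟨part1, ⟨δ', hδ', ?_⟩, ⟨_, hA'ne, part3⟩, ⟨_, hB'ne, part4⟩, ?_⟩
  · intro x hx hxd
    have h1 : |hinv x - c| < δ := by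
      have := hδ'spec (show dist x (h c) < δ' by rwa [Real.dist_eq])
      rwa [Real.dist_eq, hinvhc] at this
    have h2 : hinv x ≠ c := by
      intro he
      exact hx (by rw [← hright x, he, ← hinvhc, hright])
    have hne : deriv f (hinv x) ≠ 0 := hisoδ _ h2 h1
    rw [hg]
    exact mul_ne_zero (ne_of_gt (hpos _)) (mul_ne_zero hne (ne_of_gt (hinv_pos _)))
  -- Part 5: asymmetry
  · -- notation: y = -x + 2 h c, u = hinv x, v = hinv y, w = -u + 2c
    have hreflc : Tendsto (fun x : ℝ => -hinv x + 2 * c) (𝓝[<] (h c)) (𝓝[>] c) := by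
      apply tendsto_nhdsWithin_of_tendsto_nhds_of_eventually_within
      · have : Tendsto hinv (𝓝[<] (h c)) (𝓝 c) := hmapL.mono_right nhdsWithin_le_nhds
        have h2 := ((this.neg).add_const (2 * c))
        rwa [show -c + 2 * c = c by ring] at h2
      · filter_upwards [hsideL] with x hx
        simp only [Set.mem_Ioi]; linarith
    have hmapRv : Tendsto (fun x => hinv (-x + 2 * h c)) (𝓝[<] (h c)) (𝓝[>] c) :=
      hmapR.comp hrefl
    -- eventual facts
    have hevδu : ∀ᶠ x in 𝓝[<] (h c), |hinv x - c| < δ := by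
      have : Tendsto hinv (𝓝[<] (h c)) (𝓝 c) := hmapL.mono_right nhdsWithin_le_nhds
      have hb := this (Metric.ball_mem_nhds c hδ)
      filter_upwards [hb] with x hx
      simpa [Real.dist_eq] using hx
    have hevδv : ∀ᶠ x in 𝓝[<] (h c), |hinv (-x + 2 * h c) - c| < δ := by
      have : Tendsto (fun x => hinv (-x + 2 * h c)) (𝓝[<] (h c)) (𝓝 c) :=
        hmapRv.mono_right nhdsWithin_le_nhds
      have hb := this (Metric.ball_mem_nhds c hδ)
      filter_upwards [hb] with x hx
      simpa [Real.dist_eq] using hx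
    have hevv : ∀ᶠ x in 𝓝[<] (h c), c < hinv (-x + 2 * h c) :=
      hmapRv self_mem_nhdsWithin
    -- the individual limits
    have tσ : Tendsto (fun x => deriv f (hinv x) / deriv f (-hinv x + 2 * c))
        (𝓝[<] (h c)) (𝓝 σ) := hσ.comp hmapL
    have tw : Tendsto (fun x => deriv f (-hinv x + 2 * c) / |(-hinv x + 2 * c) - c| ^ (γ - 1))
        (𝓝[<] (h c)) (𝓝 B) := hBlim.comp hreflc
    have tv : Tendsto (fun x => deriv f (hinv (-x + 2 * h c)) /
        |hinv (-x + 2 * h c) - c| ^ (γ - 1)) (𝓝[<] (h c)) (𝓝 B) := hBlim.comp hmapRv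
    have tsL : Tendsto (fun x => |hinv x - c| / |x - h c|) (𝓝[<] (h c)) (𝓝 D) :=
      hslope.mono_left hLne
    have tsR : Tendsto (fun x => |hinv (-x + 2 * h c) - c| / |(-x + 2 * h c) - h c|)
        (𝓝[<] (h c)) (𝓝 D) := (hslope.mono_left hRne).comp hrefl
    have th1 : Tendsto (fun x => deriv h (f (hinv x))) (𝓝[<] (h c)) (𝓝 (deriv h (f c))) :=
      hhf_cont.mono_left nhdsWithin_le_nhds
    have th2 : Tendsto (fun x => deriv h (f (hinv (-x + 2 * h c)))) (𝓝[<] (h c))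
        (𝓝 (deriv h (f c))) :=
      hhf_cont.comp (hrefl.mono_right nhdsWithin_le_nhds)
    have ti1 : Tendsto (fun x => deriv hinv x) (𝓝[<] (h c)) (𝓝 D) :=
      hhi_cont.mono_left nhdsWithin_le_nhds
    have ti2 : Tendsto (fun x => deriv hinv (-x + 2 * h c)) (𝓝[<] (h c)) (𝓝 D) :=
      hhi_cont.comp (hrefl.mono_right nhdsWithin_le_nhds)
    -- ratio of slopes, with |(-x+2hc) - hc| = |x - hc|
    have tratio : Tendsto (fun x => (|hinv x - c| / |hinv (-x + 2 * h c) - c|) ^ (γ - 1))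
        (𝓝[<] (h c)) (𝓝 1) := by
      have hq : Tendsto (fun x => (|hinv x - c| / |x - h c|) /
          (|hinv (-x + 2 * h c) - c| / |(-x + 2 * h c) - h c|)) (𝓝[<] (h c)) (𝓝 (D / D)) :=
        tsL.div tsR (ne_of_gt hDpos)
      rw [div_self (ne_of_gt hDpos)] at hq
      have hq2 : Tendsto (fun x => |hinv x - c| / |hinv (-x + 2 * h c) - c|)
          (𝓝[<] (h c)) (𝓝 1) := by
        apply hq.congr'
        filter_upwards [hxneL, hevv] with x hx hv
        have hxpos : (0:ℝ) < |x - h c| := abs_pos.mpr (sub_ne_zero.mpr hx)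
        have hyeq : |(-x + 2 * h c) - h c| = |x - h c| := by
          rw [show (-x + 2 * h c) - h c = -(x - h c) by ring, abs_neg]
        have hvpos : (0:ℝ) < |hinv (-x + 2 * h c) - c| := abs_pos.mpr (sub_ne_zero.mpr (ne_of_gt hv))
        rw [hyeq]
        field_simp
      have := hq2.rpow_const (p := γ - 1) (Or.inl one_ne_zero)
      simpa using this
    -- assemble
    have tBB : Tendsto (fun x => (deriv f (-hinv x + 2 * c) / |(-hinv x + 2 * c) - c| ^ (γ - 1)) /
        (deriv f (hinv (-x + 2 * h c)) / |hinv (-x + 2 * h c) - c| ^ (γ - 1)))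
        (𝓝[<] (h c)) (𝓝 (B / B)) := tw.div tv hB0
    rw [div_self hB0] at tBB
    have tH : Tendsto (fun x => deriv h (f (hinv x)) / deriv h (f (hinv (-x + 2 * h c))))
        (𝓝[<] (h c)) (𝓝 (deriv h (f c) / deriv h (f c))) := th1.div th2 hfc_ne
    rw [div_self hfc_ne] at tH
    have tI : Tendsto (fun x => deriv hinv x / deriv hinv (-x + 2 * h c))
        (𝓝[<] (h c)) (𝓝 (D / D)) := ti1.div ti2 (ne_of_gt hDpos)
    rw [div_self (ne_of_gt hDpos)] at tI
    have tall := (((tH.mul tI).mul tσ).mul tBB).mul tratio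
    have : (1:ℝ) * 1 * σ * 1 * 1 = σ := by ring
    rw [this] at tall
    apply tall.congr'
    filter_upwards [hsideL, hevδu, hevδv, hevv, hxneL] with x hu hδu hδv hv hx
    set u := hinv x with hu_def
    set v := hinv (-x + 2 * h c) with hv_def
    have hune : u ≠ c := ne_of_lt hu
    have hvne : v ≠ c := ne_of_gt hv
    have hwne : -u + 2 * c ≠ c := by intro hcon; apply hune; linarith [hcon]
    have hfu : deriv f u ≠ 0 := hisoδ _ hune hδu
    have hfv : deriv f v ≠ 0 := hisoδ _ hvne hδv
    have hfw : deriv f (-u + 2 * c) ≠ 0 := by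
      apply hisoδ _ hwne
      rw [show (-u + 2 * c) - c = -(u - c) by ring, abs_neg]
      exact hδu
    have hupos : (0:ℝ) < |u - c| := abs_pos.mpr (sub_ne_zero.mpr hune)
    have hvpos : (0:ℝ) < |v - c| := abs_pos.mpr (sub_ne_zero.mpr hvne)
    have hur : |u - c| ^ (γ - 1) ≠ 0 := ne_of_gt (Real.rpow_pos_of_pos hupos _)
    have hvr : |v - c| ^ (γ - 1) ≠ 0 := ne_of_gt (Real.rpow_pos_of_pos hvpos _)
    have hweq : |(-u + 2 * c) - c| = |u - c| := by
      rw [show (-u + 2 * c) - c = -(u - c) by ring, abs_neg]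
    have hhu : deriv h (f u) ≠ 0 := ne_of_gt (hpos _)
    have hhv : deriv h (f v) ≠ 0 := ne_of_gt (hpos _)
    have hiu : deriv hinv x ≠ 0 := ne_of_gt (hinv_pos _)
    have hiv : deriv hinv (-x + 2 * h c) ≠ 0 := ne_of_gt (hinv_pos _)
    rw [hg x, hg (-x + 2 * h c), ← hu_def, ← hv_def,
      Real.div_rpow (abs_nonneg _) (abs_nonneg _), hweq]
    field_simp
end

section
/- Let V ⊆ ℝ be a closed set, and let f : ℝ → ℝ be a mapping which, on a neighborhood of V, is differentiable with α-Hölder continuous derivative with Hölder constant at most K₁ (for some 0 < α ≤ 1) and satisfies |f'| ≥ β₁ > 0 on V. Assume there exist constants K > 0 and ν > 1 such that whenever x, f(x), …, f^{∘(k−1)}(x) ∈ V one has |(f^{∘k})'(x)| ≥ K ν^{k}. Then for every D > 0 there exists a constant K₄ ≥ 1, depending only on K₁, β₁, K, ν, α, and D, with the following property: for every interval I ⊆ ℝ and every positive integer m such that f^{∘i}(I) ⊆ V for all 0 ≤ i ≤ m − 1 and the interval f^{∘m}(I) has length at most D, and for all points u, w ∈ I, one has |(f^{∘m})'(u)| /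 |(f^{∘m})'(w)| ≤ K₄. Consequently, for all x, y, z ∈ I with x ≠ z, |f^{∘m}(x) − f^{∘m}(y)| / |f^{∘m}(x) − f^{∘m}(z)| ≤ K₄ · |x − y| / |x − z|. -/
open Set Finset

private lemma iter_hasDerivAt {f f' : ℝ → ℝ} {W : Set ℝ}
    (hderiv : ∀ x ∈ W, HasDerivAt f (f' x) x) :
    ∀ (k : ℕ) (x : ℝ), (∀ j < k, f^[j] x ∈ W) →
    HasDerivAt (f^[k]) (∏ i ∈ Finset.range k, f' (f^[i] x)) x := by
  intro k
  induction k with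
  | zero => intro x _; simpa using hasDerivAt_id x
  | succ k ih =>
    intro x hx
    have h1 := ih x (fun j hj => hx j (Nat.lt_succ_of_lt hj))
    have h2 : HasDerivAt f (f' (f^[k] x)) (f^[k] x) :=
      hderiv _ (hx k (Nat.lt_succ_self k))
    have h3 := h2.comp x h1
    rw [Function.iterate_succ', Finset.prod_range_succ, mul_comm]
    exact h3

private lemma mvt_abs {g : ℝ → ℝ} {S : Set ℝ} (hS : S.OrdConnected)
    (hg : ∀ q ∈ S, HasDerivAt g (deriv g q) q) :
    ∀ a ∈ S, ∀ b ∈ S, ∃ c ∈ S, |g a - g b| = |deriv g c| * |a - b| := by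
  have main : ∀ a ∈ S, ∀ b ∈ S, a < b →
      ∃ c ∈ S, |g a - g b| = |deriv g c| * |a - b| := by
    intro a ha b hb hab
    have hIcc : Set.Icc a b ⊆ S := hS.out ha hb
    have hcont : ContinuousOn g (Set.Icc a b) :=
      fun x hx => (hg x (hIcc hx)).continuousAt.continuousWithinAt
    obtain ⟨c, hc, hceq⟩ := exists_hasDerivAt_eq_slope g (deriv g) hab hcont
      (fun x hx => hg x (hIcc (Set.Ioo_subset_Icc_self hx)))
    refine ⟨c, hIcc (Set.Ioo_subset_Icc_self hc), ?_⟩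
    have hne : b - a ≠ 0 := sub_ne_zero.mpr hab.ne'
    have heq : g b - g a = deriv g c * (b - a) := by
      field_simp at hceq; linarith [hceq]
    calc |g a - g b| = |g b - g a| := abs_sub_comm _ _
      _ = |deriv g c * (b - a)| := by rw [heq]
      _ = |deriv g c| * |b - a| := abs_mul _ _
      _ = |deriv g c| * |a - b| := by rw [abs_sub_comm]
  intro a ha b hb
  rcases lt_trichotomy a b with h | h | h
  · exact main a ha b hb h
  · exact ⟨a, ha, by simp [h]⟩
  · obtain ⟨c, hc, hceq⟩ := main b hb a ha h
    exact ⟨c, hc, by rw [abs_sub_comm, hceq, abs_sub_comm]⟩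

private lemma geom_tail {ρ : ℝ} (hρ0 : 0 ≤ ρ) (hρ1 : ρ < 1) :
    ∀ n : ℕ, ∑ i ∈ Finset.range n, ρ ^ (n - i) ≤ ρ / (1 - ρ) := by
  have h1 : 0 < 1 - ρ := by linarith
  intro n
  induction n with
  | zero => simp; positivity
  | succ n ih =>
    rw [Finset.sum_range_succ]
    have e : ∀ i ∈ Finset.range n, ρ ^ (n + 1 - i) = ρ * ρ ^ (n - i) := by
      intro i hi
      rw [Finset.mem_range] at hi
      rw [show n + 1 - i = (n - i) + 1 by omega, pow_succ, mul_comm]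
    rw [Finset.sum_congr rfl e, ← Finset.mul_sum]
    have h2 : ρ * ∑ i ∈ Finset.range n, ρ ^ (n - i) ≤ ρ * (ρ / (1 - ρ)) :=
      mul_le_mul_of_nonneg_left ih hρ0
    have hsimp : ρ * (ρ / (1 - ρ)) + ρ ^ (n + 1 - n) = ρ / (1 - ρ) := by
      rw [show n + 1 - n = 1 by omega, pow_one]
      field_simp; ring
    linarith [hsimp]



/-- **Uniform bounded distortion along expanded orbit segments.**
Let `V ⊆ ℝ` be closed and let `f` be differentiable with `K₁`-`α`-Hölder derivative
on an open neighborhood `W` of `V`, with `|f'| ≥ β₁ > 0` on `V`, and uniformly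
expanding (`|(f^[k])' x| ≥ K ν^k`, `ν > 1`) along orbit segments staying in `V`.
Then for every `D > 0` there is `K₄ ≥ 1`, depending only on the constants, such
that for every interval `I` whose first `m` iterates stay in `V` and with
`f^[m] '' I` of length at most `D`, the distortion of `f^[m]` on `I` is at most
`K₄`; consequently ratios of distances are distorted by at most a factor `K₄`. -/
theorem bounded_distortion_along_expanded_orbits
    (V W : Set ℝ) (hV : IsClosed V) (hW : IsOpen W) (hVW : V ⊆ W)
    (f f' : ℝ → ℝ) (α K₁ β₁ K ν : ℝ)
    (hα0 : 0 < α) (hα1 : α ≤ 1)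
    -- `f` is differentiable with `α`-Hölder derivative on the neighborhood `W` of `V`
    (hderiv : ∀ x ∈ W, HasDerivAt f (f' x) x)
    (hHolder : ∀ x ∈ W, ∀ y ∈ W, |f' x - f' y| ≤ K₁ * |x - y| ^ α)
    -- `|f'| ≥ β₁ > 0` on `V`
    (hβ : 0 < β₁) (hβV : ∀ x ∈ V, β₁ ≤ |f' x|)
    -- uniform expansion along orbit segments staying in `V`
    (hK : 0 < K) (hν : 1 < ν)
    (hexp : ∀ x : ℝ, ∀ k : ℕ, (∀ j < k, f^[j] x ∈ V) →
      K * ν ^ k ≤ |deriv (f^[k]) x|) :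
    ∀ D > (0 : ℝ), ∃ K₄ ≥ (1 : ℝ), ∀ I : Set ℝ, I.OrdConnected →
      ∀ m : ℕ, 0 < m →
      (∀ i < m, f^[i] '' I ⊆ V) →
      (∀ u ∈ f^[m] '' I, ∀ w ∈ f^[m] '' I, |u - w| ≤ D) →
      (∀ u ∈ I, ∀ w ∈ I, |deriv (f^[m]) u| / |deriv (f^[m]) w| ≤ K₄) ∧
      (∀ x ∈ I, ∀ y ∈ I, ∀ z ∈ I, x ≠ z →
        |f^[m] x - f^[m] y| / |f^[m] x - f^[m] z| ≤ K₄ * (|x - y| / |x - z|)) := by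
  intro D hD0
  have hν0 : (0 : ℝ) < ν := lt_trans one_pos hν
  set ρ : ℝ := ν ^ (-α) with hρdef
  have hρ0 : 0 < ρ := Real.rpow_pos_of_pos hν0 _
  have hρ1 : ρ < 1 := Real.rpow_lt_one_of_one_lt_of_neg hν (neg_lt_zero.mpr hα0)
  set C : ℝ := (max K₁ 0 / β₁) * ((D / K) ^ α) * (ρ / (1 - ρ)) with hCdef
  have hDK : 0 < D / K := div_pos hD0 hK
  have hC0 : 0 ≤ C := by
    have h1 : 0 ≤ (D / K) ^ α := Real.rpow_nonneg hDK.le _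
    have h2 : 0 ≤ ρ / (1 - ρ) := div_nonneg hρ0.le (by linarith)
    have h3 : 0 ≤ max K₁ 0 / β₁ := div_nonneg (le_max_right _ _) hβ.le
    positivity
  refine ⟨Real.exp C, Real.one_le_exp hC0, ?_⟩
  intro I hI m hm horbit hDle
  have horbV : ∀ q ∈ I, ∀ j < m, f^[j] q ∈ V :=
    fun q hq j hj => horbit j hj ⟨q, hq, rfl⟩
  have hder' : ∀ (n : ℕ) (p : ℝ), (∀ j < n, f^[j] p ∈ V) →
      HasDerivAt (f^[n]) (∏ i ∈ Finset.range n, f' (f^[i] p)) p :=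
    fun n p hp => iter_hasDerivAt hderiv n p (fun j hj => hVW (hp j hj))
  have hderI : ∀ q ∈ I, HasDerivAt (f^[m]) (∏ i ∈ Finset.range m, f' (f^[i] q)) q :=
    fun q hq => hder' m q (horbV q hq)
  -- contraction of earlier iterates
  have hcontr : ∀ i < m, ∀ u ∈ I, ∀ w ∈ I,
      K * ν ^ (m - i) * |f^[i] u - f^[i] w| ≤ |f^[m] u - f^[m] w| := by
    intro i hi u hu w hw
    set n := m - i with hn
    have him : n + i = m := by omega
    have hcontI : ContinuousOn (f^[i]) I := fun q hq =>
      (hder' i q (fun j hj => horbV q hq j (lt_trans hj hi))).continuousAt.continuousWithinAt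
    have hJ : (f^[i] '' I).OrdConnected :=
      isPreconnected_iff_ordConnected.mp
        ((isPreconnected_iff_ordConnected.mpr hI).image _ hcontI)
    have horbJ : ∀ p ∈ f^[i] '' I, ∀ j < n, f^[j] p ∈ V := by
      rintro p ⟨q, hq, rfl⟩ j hj
      rw [← Function.iterate_add_apply]
      exact horbV q hq (j + i) (by omega)
    have hgJ : ∀ p ∈ f^[i] '' I, HasDerivAt (f^[n]) (deriv (f^[n]) p) p := by
      intro p hp
      have h := hder' n p (horbJ p hp)
      exact h.deriv ▸ h
    obtain ⟨c, hc, hceq⟩ := mvt_abs hJ hgJ (f^[i] u) ⟨u, hu, rfl⟩ (f^[i] w) ⟨w, hw, rfl⟩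
    have hcexp : K * ν ^ n ≤ |deriv (f^[n]) c| := hexp c n (horbJ c hc)
    have hmu : f^[n] (f^[i] u) = f^[m] u := by
      rw [← Function.iterate_add_apply, him]
    have hmw : f^[n] (f^[i] w) = f^[m] w := by
      rw [← Function.iterate_add_apply, him]
    calc K * ν ^ n * |f^[i] u - f^[i] w|
        ≤ |deriv (f^[n]) c| * |f^[i] u - f^[i] w| :=
          mul_le_mul_of_nonneg_right hcexp (abs_nonneg _)
      _ = |f^[m] u - f^[m] w| := by rw [← hceq, hmu, hmw]
  -- part 1
  have part1 : ∀ u ∈ I, ∀ w ∈ I,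
      |deriv (f^[m]) u| / |deriv (f^[m]) w| ≤ Real.exp C := by
    intro u hu w hw
    have hDuw : |f^[m] u - f^[m] w| ≤ D := hDle _ ⟨u, hu, rfl⟩ _ ⟨w, hw, rfl⟩
    rw [(hderI u hu).deriv, (hderI w hw).deriv, Finset.abs_prod, Finset.abs_prod,
      ← Finset.prod_div_distrib]
    set t : ℕ → ℝ := fun i => (max K₁ 0 / β₁) * ((D / K) ^ α) * ρ ^ (m - i) with htdef
    have ht0 : ∀ i, 0 ≤ t i := by
      intro i
      have h1 : 0 ≤ (D / K) ^ α := Real.rpow_nonneg hDK.le _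
      have h3 : 0 ≤ max K₁ 0 / β₁ := div_nonneg (le_max_right _ _) hβ.le
      positivity
    have hfac : ∀ i ∈ Finset.range m,
        |f' (f^[i] u)| / |f' (f^[i] w)| ≤ Real.exp (t i) := by
      intro i hi
      rw [Finset.mem_range] at hi
      have hui : f^[i] u ∈ V := horbV u hu i hi
      have hwi : f^[i] w ∈ V := horbV w hw i hi
      have hβw : β₁ ≤ |f' (f^[i] w)| := hβV _ hwi
      have hwpos : 0 < |f' (f^[i] w)| := lt_of_lt_of_le hβ hβw
      have hHol : |f' (f^[i] u) - f' (f^[i] w)| ≤ max K₁ 0 * |f^[i] u - f^[i] w| ^ α := by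
        calc |f' (f^[i] u) - f' (f^[i] w)| ≤ K₁ * |f^[i] u - f^[i] w| ^ α :=
              hHolder _ (hVW hui) _ (hVW hwi)
          _ ≤ max K₁ 0 * |f^[i] u - f^[i] w| ^ α :=
              mul_le_mul_of_nonneg_right (le_max_left _ _)
                (Real.rpow_nonneg (abs_nonneg _) _)
      have hdist : |f^[i] u - f^[i] w| ≤ D / (K * ν ^ (m - i)) := by
        have h := hcontr i hi u hu w hw
        have hpos : (0 : ℝ) < K * ν ^ (m - i) := by positivity
        rw [le_div_iff₀ hpos]
        nlinarith [h, hDuw]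
      have hrpow : |f^[i] u - f^[i] w| ^ α ≤ (D / K) ^ α * ρ ^ (m - i) := by
        have h1 : |f^[i] u - f^[i] w| ^ α ≤ (D / (K * ν ^ (m - i))) ^ α :=
          Real.rpow_le_rpow (abs_nonneg _) hdist hα0.le
        have h2 : (D / (K * ν ^ (m - i))) ^ α = (D / K) ^ α * ρ ^ (m - i) := by
          set j := m - i
          have e1 : D / (K * ν ^ j) = (D / K) * (ν ^ j)⁻¹ := by
            rw [div_mul_eq_div_div, div_eq_mul_inv]
          rw [e1, Real.mul_rpow hDK.le (by positivity)]
          congr 1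
          rw [← Real.rpow_natCast ν j, ← Real.rpow_neg hν0.le,
            ← Real.rpow_mul hν0.le, hρdef, ← Real.rpow_natCast (ν ^ (-α)) j,
            ← Real.rpow_mul hν0.le]
          ring_nf
        rw [← h2]; exact h1
      have hratio : |f' (f^[i] u)| / |f' (f^[i] w)| ≤ 1 + t i := by
        rw [div_le_iff₀ hwpos]
        have habs : |f' (f^[i] u)| - |f' (f^[i] w)| ≤ |f' (f^[i] u) - f' (f^[i] w)| :=
          abs_sub_abs_le_abs_sub _ _
        have h3 : max K₁ 0 * (|f^[i] u - f^[i] w| ^ α) ≤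
            max K₁ 0 * ((D / K) ^ α * ρ ^ (m - i)) :=
          mul_le_mul_of_nonneg_left hrpow (le_max_right _ _)
        have h4 : t i * β₁ = max K₁ 0 * ((D / K) ^ α * ρ ^ (m - i)) := by
          rw [htdef]; field_simp
        have h5 : t i * β₁ ≤ t i * |f' (f^[i] w)| :=
          mul_le_mul_of_nonneg_left hβw (ht0 i)
        have hexpand : (1 + t i) * |f' (f^[i] w)| = |f' (f^[i] w)| + t i * |f' (f^[i] w)| := by
          ring
        linarith
      calc |f' (f^[i] u)| / |f' (f^[i] w)| ≤ 1 + t i := hratio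
        _ ≤ Real.exp (t i) := by linarith [Real.add_one_le_exp (t i)]
    calc ∏ i ∈ Finset.range m, |f' (f^[i] u)| / |f' (f^[i] w)|
        ≤ ∏ i ∈ Finset.range m, Real.exp (t i) :=
          Finset.prod_le_prod (fun i _ => by positivity) hfac
      _ = Real.exp (∑ i ∈ Finset.range m, t i) := (Real.exp_sum _ _).symm
      _ ≤ Real.exp C := by
          apply Real.exp_le_exp.mpr
          have e : ∑ i ∈ Finset.range m, t i =
              (max K₁ 0 / β₁) * ((D / K) ^ α) * ∑ i ∈ Finset.range m, ρ ^ (m - i) := by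
            rw [Finset.mul_sum]
          rw [e, hCdef]
          apply mul_le_mul_of_nonneg_left (geom_tail hρ0.le hρ1 m)
          have h1 : 0 ≤ (D / K) ^ α := Real.rpow_nonneg hDK.le _
          have h3 : 0 ≤ max K₁ 0 / β₁ := div_nonneg (le_max_right _ _) hβ.le
          positivity
  refine ⟨part1, ?_⟩
  intro x hx y hy z hz hxz
  have hgI : ∀ q ∈ I, HasDerivAt (f^[m]) (deriv (f^[m]) q) q := by
    intro q hq
    have h := hderI q hq
    exact h.deriv ▸ h
  obtain ⟨c₁, hc₁, e₁⟩ := mvt_abs hI hgI x hx y hy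
  obtain ⟨c₂, hc₂, e₂⟩ := mvt_abs hI hgI x hx z hz
  have hd2 : 0 < |deriv (f^[m]) c₂| :=
    lt_of_lt_of_le (by positivity) (hexp c₂ m (horbV c₂ hc₂))
  have hxz' : 0 < |x - z| := abs_pos.mpr (sub_ne_zero.mpr hxz)
  rw [e₁, e₂]
  have heq : |deriv (f^[m]) c₁| * |x - y| / (|deriv (f^[m]) c₂| * |x - z|) =
      (|deriv (f^[m]) c₁| / |deriv (f^[m]) c₂|) * (|x - y| / |x - z|) := by
    rw [div_mul_div_comm]
  rw [heq]
  exact mul_le_mul_of_nonneg_right (part1 c₁ hc₁ c₂ hc₂) (by positivity)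
end
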